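/- arXiv:2605.13474 — 2 statements merged into one kernel-verified Lean document; each statement's English description precedes it below -/
import Mathlib

section
/- Conversely, if S is a (k,ρ)-shortcut set of size at most α for the directed gadget graph G(H), then H has a hitting set of size at most α. In particular, any shortcut in S starting outside V(H) can be replaced by a shortcut of the form (v, T_2) with v ∈ V(H) without increasing the size of the shortcut set. -/
open scoped ENNReal Classical

/-- A walk from `u` is recorded as the list `p` of vertices visited after `u`;
it ends at `v` if the last vertex of `u :: p` is `v`. -/
def WalkEnds {V : Type*} (u : V) (p : List V) (v : V) : Prop := p.getLastD u = v

/-- A weighted (di)graph on vertex set `V`: weight `⊤` means "no edge". -/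
structure WGraph (V : Type*) where
  w : V → V → ℝ≥0∞

namespace WGraph

variable {V : Type*} (G : WGraph V)

/-- Total weight of the walk `u :: p`. -/
noncomputable def walkWeight : V → List V → ℝ≥0∞
  | _, [] => 0
  | u, v :: p => G.w u v + walkWeight v p

/-- Weight distance. -/
noncomputable def dist (u v : V) : ℝ≥0∞ :=
  sInf {c | ∃ p : List V, WalkEnds u p v ∧ G.walkWeight u p = c}

/-- Hop distance: the minimum number of edges among minimum-weight walks;
`⊤` if `v` is unreachable from `u`. -/
noncomputable def hopdist (u v : V) : ℕ∞ :=
  if G.dist u v = ⊤ then ⊤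
  else sInf {n : ℕ∞ | ∃ p : List V, WalkEnds u p v ∧
    G.walkWeight u p = G.dist u v ∧ (p.length : ℕ∞) = n}

/-- The set of vertices reachable from `u`, other than `u` itself. -/
def Reach (u : V) : Set V := {v | v ≠ u ∧ G.dist u v ≠ ⊤}

/-- `S` is a `ρ`-closest neighbor set of `u`. -/
def IsClosest (ρ : ℕ) (u : V) (S : Set V) : Prop :=
  S ⊆ G.Reach u ∧ S.ncard = min (G.Reach u).ncard ρ ∧
    ∀ v ∈ S, ∀ x ∈ G.Reach u \ S, G.dist u v ≤ G.dist u x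

/-- `u` has a `(k,ρ)`-ball: some `ρ`-closest neighbor set lies within hop distance `k`. -/
def HasBall (k ρ : ℕ) (u : V) : Prop :=
  ∃ S : Set V, G.IsClosest ρ u S ∧ ∀ v ∈ S, G.hopdist u v ≤ (k : ℕ∞)

/-- `G` is a `(k,ρ)`-graph. -/
def IsKRhoGraph (k ρ : ℕ) : Prop := ∀ u, G.HasBall k ρ u

/-- `G` is undirected (symmetric weights). -/
def Symm : Prop := ∀ u v, G.w u v = G.w v u

/-- All edge weights are strictly positive (trivial for non-edges of weight `⊤`). -/
def Positive : Prop := ∀ u v, 0 < G.w u v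

/-- `(u,v)` is a (potential) shortcut: `v` is reachable from `u` and the hop distance
exceeds `1`. -/
def IsShortcut (u v : V) : Prop := G.dist u v ≠ ⊤ ∧ 1 < G.hopdist u v

/-- Add each pair in `S` as a directed edge of weight `G.dist`. -/
noncomputable def addD (S : Set (V × V)) : WGraph V :=
  ⟨fun a b => G.w a b ⊓ sInf {c | (a, b) ∈ S ∧ c = G.dist a b}⟩

/-- Add each pair in `S` as an undirected edge of weight `G.dist`. -/
noncomputable def addU (S : Set (V × V)) : WGraph V :=
  ⟨fun a b => G.w a b ⊓ sInf {c | ((a, b) ∈ S ∨ (b, a) ∈ S) ∧ c = G.dist a b}⟩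

/-- `S` is a (directed) `(k,ρ)`-shortcut set for `G`. -/
def IsShortcutSetD (k ρ : ℕ) (S : Set (V × V)) : Prop :=
  (∀ p ∈ S, G.IsShortcut p.1 p.2) ∧ (G.addD S).IsKRhoGraph k ρ ∧
    ∀ x y, (G.addD S).dist x y = G.dist x y

/-- `S` is an (undirected) `(k,ρ)`-shortcut set for `G`. -/
def IsShortcutSetU (k ρ : ℕ) (S : Set (V × V)) : Prop :=
  (∀ p ∈ S, G.IsShortcut p.1 p.2) ∧ (G.addU S).IsKRhoGraph k ρ ∧
    ∀ x y, (G.addU S).dist x y = G.dist x y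

end WGraph

/-- Vertices of the hitting-set gadget graph: for each hyperedge `e` the path vertices
`pv e 0, …, pv e (k-2)` (so `s_e = pv e 0` and `t_e = pv e (k-2)`), a vertex `hv v`
for each hypergraph vertex `v`, and the two terminals `T1`, `T2`. -/
inductive GV (α ε : Type*) where
  | pv : ε → ℕ → GV α ε
  | hv : α → GV α ε
  | T1 : GV α ε
  | T2 : GV α ε

/-- Edge weights of the directed hitting-set gadget graph. -/
noncomputable def gadgetW {α ε : Type*} [DecidableEq α] [DecidableEq ε]
    (k : ℕ) (E : ε → Finset α) : GV α ε → GV α ε → ℝ≥0∞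
  | .pv e i, .pv e' j => if e = e' ∧ j = i + 1 ∧ j ≤ k - 2 then 1 else ⊤
  | .pv e i, .hv v => if i = k - 2 ∧ v ∈ E e then 3 else ⊤
  | .hv _, .T1 => 1
  | .T1, .T2 => 1
  | _, _ => ⊤

/-- The directed hitting-set gadget graph `G(H)`. -/
noncomputable def gadget {α ε : Type*} [DecidableEq α] [DecidableEq ε]
    (k : ℕ) (E : ε → Finset α) : WGraph (GV α ε) :=
  ⟨gadgetW k E⟩

/-- The undirected hitting-set gadget graph: every directed edge replaced by an
undirected edge of the same weight. -/
noncomputable def ugadget {α ε : Type*} [DecidableEq α] [DecidableEq ε]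
    (k : ℕ) (E : ε → Finset α) : WGraph (GV α ε) :=
  ⟨fun a b => gadgetW k E a b ⊓ gadgetW k E b a⟩

/-- `U` is a hitting set of the hypergraph with hyperedges `E`. -/
def IsHittingSet {α ε : Type*} (E : ε → Finset α) (U : Finset α) : Prop :=
  ∀ e, ∃ v ∈ U, v ∈ E e

/-!
From `s_e = pv e 0` only `k + d` vertices are reachable: the rest of the path of `e`, the
vertices `hv v` with `v ∈ e`, `T1` and `T2`. In a `(k, ρ)`-graph with `ρ = k + d` all of them,
`T2` included, must therefore lie within `k` hops of `s_e`. Every `s_e`–`T2` walk of `G(H)`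
has exactly `k + 1` edges, so a minimum-weight walk of at most `k` hops must use a shortcut
whose source is reachable from `s_e`. No shortcut leaves `T1` or `T2`, so that source is a
path vertex of `e` or some `hv v` with `v ∈ e`. Charging every shortcut to one hypergraph
vertex in this way (`hitVertex`) hits every hyperedge with at most `|S|` vertices.
-/

namespace WGraph

open Relation

variable {V : Type*} (G : WGraph V)

def Adj (x y : V) : Prop := G.w x y ≠ ⊤

variable {G} {u v : V} {p : List V}

@[simp] lemma walkWeight_nil (u : V) : G.walkWeight u [] = 0 := rfl

@[simp] lemma walkWeight_cons (u y : V) (p : List V) :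
    G.walkWeight u (y :: p) = G.w u y + G.walkWeight y p := rfl

lemma walkEnds_cons {y : V} : WalkEnds u (y :: p) v ↔ WalkEnds y p v := by
  simp only [WalkEnds, List.getLastD_cons]

lemma dist_le_walkWeight (h : WalkEnds u p v) : G.dist u v ≤ G.walkWeight u p :=
  sInf_le ⟨p, h, rfl⟩

lemma reflTransGen_adj_of_walkWeight_ne_top :
    ∀ {u}, WalkEnds u p v → G.walkWeight u p ≠ ⊤ → ReflTransGen G.Adj u v := by
  induction p with
  | nil => rintro u rfl -; rfl
  | cons y q ih =>
    intro u hp hw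
    rw [walkWeight_cons, ENNReal.add_ne_top] at hw
    exact .head hw.1 (ih (walkEnds_cons.mp hp) hw.2)

lemma exists_walk_of_reflTransGen_adj (h : ReflTransGen G.Adj u v) :
    ∃ p, WalkEnds u p v ∧ G.walkWeight u p ≠ ⊤ := by
  induction h using ReflTransGen.head_induction_on with
  | refl => exact ⟨[], rfl, by simp⟩
  | head hxy _ ih =>
    obtain ⟨p, hp, hw⟩ := ih
    exact ⟨_ :: p, walkEnds_cons.mpr hp, by simpa using ⟨hxy, hw⟩⟩

lemma dist_ne_top_iff_reflTransGen : G.dist u v ≠ ⊤ ↔ ReflTransGen G.Adj u v := by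
  refine ⟨fun h => ?_, fun h => ?_⟩
  · obtain ⟨_, ⟨p, hp, rfl⟩, hw⟩ := sInf_lt_iff.mp h.lt_top
    exact reflTransGen_adj_of_walkWeight_ne_top hp hw.ne
  · obtain ⟨p, hp, hw⟩ := exists_walk_of_reflTransGen_adj h
    exact ne_top_of_le_ne_top hw (dist_le_walkWeight hp)

lemma hopdist_le_length (hfin : G.dist u v ≠ ⊤) (hp : WalkEnds u p v)
    (hw : G.walkWeight u p = G.dist u v) : G.hopdist u v ≤ p.length := by
  rw [hopdist, if_neg hfin]
  exact sInf_le ⟨p, hp, hw, rfl⟩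

lemma le_hopdist {n : ℕ∞}
    (h : ∀ p, WalkEnds u p v → G.walkWeight u p ≠ ⊤ → n ≤ p.length) :
    n ≤ G.hopdist u v := by
  unfold hopdist
  split_ifs with hfin
  · exact le_top
  · exact le_sInf fun _ ⟨p, hp, hw, hlen⟩ => hlen ▸ h p hp (hw ▸ hfin)

lemma exists_walk_length_eq_hopdist (h : G.hopdist u v ≠ ⊤) :
    ∃ p, WalkEnds u p v ∧ G.walkWeight u p = G.dist u v ∧
      (p.length : ℕ∞) = G.hopdist u v := by
  have hfin : G.dist u v ≠ ⊤ := fun htop => h (by simp [hopdist, htop])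
  rw [hopdist, if_neg hfin] at h ⊢
  obtain ⟨_, ⟨p, hp, hw, rfl⟩, -⟩ := sInf_lt_iff.mp h.lt_top
  exact csInf_mem (⟨_, p, hp, hw, rfl⟩ : {n : ℕ∞ | ∃ p, WalkEnds u p v ∧
    G.walkWeight u p = G.dist u v ∧ (p.length : ℕ∞) = n}.Nonempty)

lemma level_eq_add_length (level : V → ℕ)
    (hlevel : ∀ x y, G.Adj x y → level y = level x + 1) :
    ∀ {u}, WalkEnds u p v → G.walkWeight u p ≠ ⊤ → level v = level u + p.length := by
  induction p with
  | nil => rintro u rfl -; rfl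
  | cons y q ih =>
    intro u hp hw
    rw [walkWeight_cons, ENNReal.add_ne_top] at hw
    rw [ih (walkEnds_cons.mp hp) hw.2, hlevel u y hw.1, List.length_cons]
    ring

lemma IsShortcut.reflTransGen (h : G.IsShortcut u v) : ReflTransGen G.Adj u v :=
  dist_ne_top_iff_reflTransGen.mp h.1

lemma IsShortcut.ne (h : G.IsShortcut u v) : u ≠ v := by
  rintro rfl
  have hzero : G.dist u u = 0 := le_antisymm (dist_le_walkWeight (p := []) rfl) bot_le
  have := hopdist_le_length (p := []) h.1 rfl (by simp [hzero])
  exact absurd (h.2.trans_le this) (by simp)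

lemma not_isShortcut_of_forall_adj (h : ∀ y z, G.Adj u y → ¬ G.Adj y z) :
    ¬ G.IsShortcut u v := by
  intro hsc
  have hwalk : ∀ p, WalkEnds u p v → G.walkWeight u p ≠ ⊤ → p = [v] := by
    rintro (_ | ⟨y, _ | ⟨z, q⟩⟩) hp hw
    · exact absurd hp hsc.ne
    · exact congrArg ([·]) hp
    · simp only [walkWeight_cons, ENNReal.add_ne_top] at hw
      exact absurd hw.2.1 (h y z hw.1)
  have hw : G.walkWeight u [v] = G.dist u v := by
    refine le_antisymm ?_ (dist_le_walkWeight rfl)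
    refine le_sInf fun _ ⟨p, hp, hc⟩ => hc ▸ ?_
    by_cases hfin : G.walkWeight u p = ⊤
    · simp [hfin]
    · rw [hwalk p hp hfin]
  have := hopdist_le_length (p := [v]) hsc.1 rfl hw
  exact absurd (hsc.2.trans_le this) (by simp)

lemma finite_of_forall_isShortcut {S : Set (V × V)}
    (hfin : {x | ∃ y, G.Adj x y ∨ G.Adj y x}.Finite) (hS : ∀ p ∈ S, G.IsShortcut p.1 p.2) :
    S.Finite := by
  refine (hfin.prod hfin).subset fun ⟨x, y⟩ hxy => ?_
  have hsc : G.IsShortcut x y := hS _ hxy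
  obtain rfl | ⟨z, hxz, -⟩ := hsc.reflTransGen.cases_head
  · exact absurd rfl hsc.ne
  obtain h | ⟨z', -, hzy⟩ := hsc.reflTransGen.cases_tail
  · exact absurd h.symm hsc.ne
  exact ⟨⟨z, .inl hxz⟩, ⟨z', .inr hzy⟩⟩

lemma IsKRhoGraph.hopdist_le {k ρ : ℕ} (hG : G.IsKRhoGraph k ρ) (hfin : (G.Reach u).Finite)
    (hcard : (G.Reach u).ncard ≤ ρ) (hv : v ∈ G.Reach u) : G.hopdist u v ≤ k := by
  obtain ⟨B, ⟨hBsub, hBcard, -⟩, hB⟩ := hG u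
  have hB_eq : B = G.Reach u := Set.eq_of_subset_of_ncard_le hBsub (by omega) hfin
  exact hB v (hB_eq ▸ hv)

lemma walkWeight_addD_eq {S : Set (V × V)}
    (hS : ∀ x, ReflTransGen G.Adj u x → ∀ y, (x, y) ∉ S) :
    (G.addD S).walkWeight u p ≠ ⊤ → G.walkWeight u p = (G.addD S).walkWeight u p := by
  induction p generalizing u with
  | nil => simp
  | cons y q ih =>
    intro hw
    have hwuy : (G.addD S).w u y = G.w u y := by
      have : {c | (u, y) ∈ S ∧ c = G.dist u y} = ∅ := by ext; simp [hS u .refl y]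
      simp [addD, this]
    rw [walkWeight_cons, ENNReal.add_ne_top, hwuy] at hw
    rw [walkWeight_cons, walkWeight_cons, hwuy,
      ih (fun x hx => hS x (.head hw.1 hx)) hw.2]

lemma exists_reachable_source_of_hopdist_addD_lt {S : Set (V × V)}
    (hdist : (G.addD S).dist u v = G.dist u v)
    (hhop : (G.addD S).hopdist u v < G.hopdist u v) :
    ∃ x y, (x, y) ∈ S ∧ ReflTransGen G.Adj u x := by
  by_contra! hS
  obtain ⟨p, hp, hw, hlen⟩ := exists_walk_length_eq_hopdist hhop.ne_top
  have hfin : (G.addD S).dist u v ≠ ⊤ := by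
    rintro htop
    simp [hopdist, htop] at hlen
  rw [← walkWeight_addD_eq (fun x hx y hxy => hS x y hxy hx) (hw ▸ hfin), hdist] at hw
  have := hopdist_le_length (hdist ▸ hfin) hp hw
  exact absurd (hhop.trans_le (hlen ▸ this)) (lt_irrefl _)

lemma IsShortcutSetD.exists_reachable_source {k ρ : ℕ} {S : Set (V × V)}
    (hS : G.IsShortcutSetD k ρ S) (hfin : (G.Reach u).Finite) (hcard : (G.Reach u).ncard ≤ ρ)
    (hv : v ∈ G.Reach u) (hk : (k : ℕ∞) < G.hopdist u v) :
    ∃ x y, (x, y) ∈ S ∧ ReflTransGen G.Adj u x := by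
  obtain ⟨-, hball, hdist⟩ := hS
  have hreach : (G.addD S).Reach u = G.Reach u := by ext; simp [Reach, hdist]
  refine exists_reachable_source_of_hopdist_addD_lt (hdist u v) (lt_of_le_of_lt ?_ hk)
  exact hball.hopdist_le (hreach ▸ hfin) (hreach ▸ hcard) (hreach ▸ hv)

end WGraph

namespace GV

open Relation WGraph

variable {α ε : Type*}

noncomputable def hitVertex (E : ε → Finset α) : GV α ε → Finset α
  | pv e _ => if h : (E e).Nonempty then {h.choose} else ∅
  | hv v => {v}
  | _ => ∅

lemma card_hitVertex_le_one (E : ε → Finset α) (x : GV α ε) : (hitVertex E x).card ≤ 1 := by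
  cases x with
  | pv e _ => simp only [hitVertex]; split_ifs <;> simp
  | _ => simp [hitVertex]

def level (k : ℕ) : GV α ε → ℕ
  | pv _ i => i
  | hv _ => k - 1
  | T1 => k
  | T2 => k + 1

variable [DecidableEq α] [DecidableEq ε] {k : ℕ} {E : ε → Finset α}

noncomputable def edgeGadget (k : ℕ) (E : ε → Finset α) (e : ε) : Finset (GV α ε) :=
  (Finset.range (k - 1)).image (pv e) ∪ (E e).image hv ∪ {T1, T2}

lemma level_adj (hk : 2 ≤ k) {x y : GV α ε} (h : (gadget k E).Adj x y) :
    level k y = level k x + 1 := by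
  cases x <;> cases y <;> simp_all [Adj, gadget, gadgetW, level]
  omega

lemma finite_setOf_adj [Finite α] [Finite ε] :
    {x : GV α ε | ∃ y, (gadget k E).Adj x y ∨ (gadget k E).Adj y x}.Finite := by
  refine ((Set.finite_range fun p : ε × Fin (k + 1) => pv p.1 p.2).union
    ((Set.finite_range hv).union (Set.toFinite {T1, T2}))).subset ?_
  rintro x ⟨y, h | h⟩ <;> cases x <;> cases y <;> simp_all [Adj, gadget, gadgetW]
  all_goals exact ⟨⟨_, by omega⟩, rfl⟩

lemma mem_edgeGadget_of_reflTransGen (hk : 2 ≤ k) {e : ε} {x : GV α ε}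
    (h : ReflTransGen (gadget k E).Adj (pv e 0) x) : x ∈ edgeGadget k E e := by
  induction h with
  | refl => simp [edgeGadget]; omega
  | @tail y z _ hyz ih =>
    cases y <;> cases z <;> simp_all [edgeGadget, Adj, gadget, gadgetW]
    omega

lemma reflTransGen_adj_pv_T2 {e : ε} {v : α} (hvE : v ∈ E e) :
    ReflTransGen (gadget k E).Adj (pv e 0) T2 := by
  have hpath : ∀ m ≤ k - 2, ReflTransGen (gadget k E).Adj (pv e 0) (pv e m) := by
    intro m hm
    induction m with
    | zero => rfl
    | succ m ih => exact (ih (by omega)).tail (by simp [Adj, gadget, gadgetW]; omega)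
  refine (((hpath (k - 2) le_rfl).tail (c := hv v) ?_).tail (c := T1) ?_).tail ?_ <;>
    simp [Adj, gadget, gadgetW, hvE]

lemma lt_hopdist_pv_T2 (hk : 2 ≤ k) (e : ε) :
    (k : ℕ∞) < (gadget k E).hopdist (pv e 0) T2 := by
  refine lt_of_lt_of_le (by norm_cast; omega : (k : ℕ∞) < (k + 1 : ℕ)) (le_hopdist ?_)
  intro p hp hw
  have := level_eq_add_length (level k) (fun _ _ => level_adj hk) hp hw
  simp only [level, zero_add] at this
  exact_mod_cast this.le

lemma reach_subset_edgeGadget (hk : 2 ≤ k) (e : ε) :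
    (gadget k E).Reach (pv e 0) ⊆ ↑((edgeGadget k E e).erase (pv e 0)) := fun _ ⟨hne, hx⟩ =>
  Finset.mem_erase.mpr
    ⟨hne, mem_edgeGadget_of_reflTransGen hk (dist_ne_top_iff_reflTransGen.mp hx)⟩

lemma ncard_reach_le (hk : 2 ≤ k) (e : ε) :
    ((gadget k E).Reach (pv e 0)).ncard ≤ k + (E e).card := by
  have hpv : pv e 0 ∈ edgeGadget k E e := mem_edgeGadget_of_reflTransGen hk .refl
  have hcard : (edgeGadget k E e).card ≤ k - 1 + (E e).card + 2 := by
    refine (Finset.card_union_le _ _).trans (add_le_add ((Finset.card_union_le _ _).trans ?_) ?_)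
    · exact add_le_add (Finset.card_image_le.trans (Finset.card_range _).le) Finset.card_image_le
    · exact Finset.card_le_two (a := (T1 : GV α ε)) (b := T2)
  calc ((gadget k E).Reach (pv e 0)).ncard
      ≤ ((edgeGadget k E e).erase (pv e 0)).card := by
        rw [← Set.ncard_coe_finset]
        exact Set.ncard_le_ncard (reach_subset_edgeGadget hk e) (Finset.finite_toSet _)
    _ ≤ k + (E e).card := by rw [Finset.card_erase_of_mem hpv]; omega

lemma exists_mem_hitVertex_of_isShortcut (hk : 2 ≤ k) {e : ε} (hne : (E e).Nonempty)
    {x y : GV α ε} (hxy : (gadget k E).IsShortcut x y)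
    (hx : ReflTransGen (gadget k E).Adj (pv e 0) x) :
    ∃ w ∈ hitVertex E x, w ∈ E e := by
  have hmem := mem_edgeGadget_of_reflTransGen hk hx
  cases x with
  | pv e' i =>
    obtain ⟨-, rfl⟩ : i < k - 1 ∧ e = e' := by simpa [edgeGadget] using hmem
    exact ⟨hne.choose, by simp [hitVertex, hne], hne.choose_spec⟩
  | hv v => exact ⟨v, by simp [hitVertex], by simpa [edgeGadget] using hmem⟩
  | T1 | T2 =>
    refine absurd hxy (not_isShortcut_of_forall_adj fun y z h₁ h₂ => ?_)
    cases y <;> cases z <;> simp_all [Adj, gadget, gadgetW]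

end GV

theorem stmt12_general {α ε : Type*} [Fintype α] [Fintype ε] [DecidableEq α] [DecidableEq ε]
    (k ρ d : ℕ) (hk : 2 ≤ k) (hd : 2 ≤ d) (hρ : ρ = k + d)
    (E : ε → Finset α) (hcard : ∀ e, (E e).card = d)
    (a : ℕ) (S : Set (GV α ε × GV α ε))
    (hS : (gadget k E).IsShortcutSetD k ρ S) (hSa : S.ncard ≤ a) :
    ∃ U : Finset α, U.card ≤ a ∧ IsHittingSet E U := by
  have hSfin : S.Finite := WGraph.finite_of_forall_isShortcut GV.finite_setOf_adj hS.1
  refine ⟨hSfin.toFinset.biUnion fun p => GV.hitVertex E p.1, ?_, fun e => ?_⟩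
  · calc _ ≤ hSfin.toFinset.card * 1 :=
          Finset.card_biUnion_le_card_mul _ _ _ fun p _ => GV.card_hitVertex_le_one E p.1
      _ ≤ a := by rwa [mul_one, ← Set.ncard_eq_toFinset_card S hSfin]
  obtain ⟨v, hv⟩ : (E e).Nonempty := Finset.card_pos.mp (by rw [hcard e]; omega)
  obtain ⟨x, y, hxy, hx⟩ := hS.exists_reachable_source
    ((Finset.finite_toSet _).subset (GV.reach_subset_edgeGadget hk e))
    ((GV.ncard_reach_le hk e).trans (by rw [hcard, hρ]))
    ⟨by simp, WGraph.dist_ne_top_iff_reflTransGen.mpr (GV.reflTransGen_adj_pv_T2 hv)⟩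
    (GV.lt_hopdist_pv_T2 hk e)
  obtain ⟨w, hw, hwE⟩ := GV.exists_mem_hitVertex_of_isShortcut hk ⟨v, hv⟩ (hS.1 _ hxy) hx
  exact ⟨w, Finset.mem_biUnion.mpr ⟨(x, y), hSfin.mem_toFinset.mpr hxy, hw⟩, hwE⟩

/-- if `S` is a `(k,ρ)`-shortcut set of size at most `a` for the
directed gadget graph (k ≥ 2, ρ = k + d ≥ k + 2, uniform hyperedge size d), then the
hypergraph has a hitting set of size at most `a`. -/
theorem stmt12 {α ε : Type*} [Fintype α] [Fintype ε] [DecidableEq α] [DecidableEq ε]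
    (k ρ d : ℕ) (hk : 2 ≤ k) (hd : 2 ≤ d) (hρ : ρ = k + d)
    (E : ε → Finset α) (hcard : ∀ e, (E e).card = d)
    (hV : Nonempty ε → d + 1 ≤ Fintype.card α)
    (a : ℕ) (S : Set (GV α ε × GV α ε))
    (hS : (gadget k E).IsShortcutSetD k ρ S) (hSa : S.ncard ≤ a) :
    ∃ U : Finset α, U.card ≤ a ∧ IsHittingSet E U :=
  stmt12_general k ρ d hk hd hρ E hcard a S hS hSa
end

section
/- In an undirected graph with strictly positive edge weights, if v lacks a (k,k+1)-ball then all vertices at the final level (level k+1) of the (k+1)-constrained shortest path tree of v have the same weight distance to v. -/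
open scoped ENNReal Classical

namespace WGraph

variable {V : Type*} (G : WGraph V)

/-- The union of all `ρ`-closest neighbor sets of `v`. -/
def closestUnion (ρ : ℕ) (v : V) : Set V :=
  {u | ∃ S : Set V, G.IsClosest ρ v S ∧ u ∈ S}

/-- `Sφ` is the set of the `min(|R_v|,ρ)` smallest elements of the union of all
`ρ`-closest neighbor sets of `v`, under the lexicographic order on `(dist(v,·), φ(·))`. -/
def IsPhiSet (φ : V → ℕ) (ρ : ℕ) (v : V) (Sφ : Set V) : Prop :=
  Sφ ⊆ G.closestUnion ρ v ∧ Sφ.ncard = min (G.Reach v).ncard ρ ∧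
    ∀ a ∈ Sφ, ∀ b ∈ G.closestUnion ρ v \ Sφ,
      G.dist v a < G.dist v b ∨ (G.dist v a = G.dist v b ∧ φ a < φ b)

end WGraph

/-- A shortest-path-with-fewest-hops tree rooted at `v` spanning `S`:
for each `s ∈ S` a walk from `v` to `s` of minimum weight and, among those, fewest
hops, such that the walks cohere into a tree (each vertex has a unique path from the
root, expressed by equality of the prefixes up to the first occurrence). -/
structure FHTree {V : Type*} [DecidableEq V] (G : WGraph V) (v : V) (S : Set V) where
  walk : (s : V) → s ∈ S → List V
  ends : ∀ s hs, WalkEnds v (walk s hs) s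
  minWeight : ∀ s hs, G.walkWeight v (walk s hs) = G.dist v s
  fewHops : ∀ s hs, ((walk s hs).length : ℕ∞) = G.hopdist v s
  coherent : ∀ s hs t ht (x : V), x ∈ walk s hs → x ∈ walk t ht →
    (walk s hs).take ((walk s hs).idxOf x + 1) =
      (walk t ht).take ((walk t ht).idxOf x + 1)

namespace FHTree

variable {V : Type*} [DecidableEq V] {G : WGraph V} {v : V} {S : Set V}

/-- The tree is a path: the walks are totally ordered by the prefix relation. -/
def IsPath (T : FHTree G v S) : Prop :=
  ∀ s hs t ht, T.walk s hs <+: T.walk t ht ∨ T.walk t ht <+: T.walk s hs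

/-- The vertex set of the tree. -/
def verts (T : FHTree G v S) : Set V :=
  insert v {x | ∃ s hs, x ∈ T.walk s hs}

/-- The edge set of the tree, as unordered pairs. -/
def edges (T : FHTree G v S) : Set (Sym2 V) :=
  {e | ∃ s hs, ∃ l₁ l₂ : List V, ∃ a b : V,
    v :: T.walk s hs = l₁ ++ a :: b :: l₂ ∧ e = s(a, b)}

end FHTree


namespace WGraph

variable {V : Type*} (G : WGraph V)

theorem walkWeight_append' (u : V) (l1 l2 : List V) :
    G.walkWeight u (l1 ++ l2) = G.walkWeight u l1 + G.walkWeight (l1.getLastD u) l2 := by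
  induction l1 generalizing u with
  | nil => simp [walkWeight]
  | cons a t ih =>
    simp only [List.cons_append, walkWeight, List.append_eq, ih a, List.getLastD_cons, add_assoc]

theorem dist_le'' {u x : V} {p : List V} (h : WalkEnds u p x) :
    G.dist u x ≤ G.walkWeight u p := sInf_le ⟨p, h, rfl⟩

theorem dist_self' (u : V) : G.dist u u = 0 :=
  le_antisymm (G.dist_le'' (p := []) rfl) zero_le

theorem getLastD_append'' (d : V) (l1 l2 : List V) :
    (l1 ++ l2).getLastD d = l2.getLastD (l1.getLastD d) := by
  induction l1 generalizing d with
  | nil => rfl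
  | cons a t ih =>
    simp only [List.cons_append, List.getLastD_cons, ih]

theorem getLastD_take_succ' (d : V) (p : List V) (n : ℕ) (hn : n < p.length) :
    (p.take (n + 1)).getLastD d = p[n] := by
  rw [List.take_succ, getLastD_append'', List.getElem?_eq_getElem hn]
  rfl

/-- Subpath optimality: prefixes of a minimum-weight walk are minimum-weight walks. -/
theorem dist_prefix' {v s : V} {p : List V} (hp : WalkEnds v p s)
    (hw : G.walkWeight v p = G.dist v s) (hfin : G.dist v s ≠ ⊤) (n : ℕ) :
    G.dist v ((p.take n).getLastD v) = G.walkWeight v (p.take n) := by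
  set x := (p.take n).getLastD v with hx
  have hsplit : G.walkWeight v p
      = G.walkWeight v (p.take n) + G.walkWeight x (p.drop n) := by
    conv_lhs => rw [← List.take_append_drop n p]
    rw [walkWeight_append']
  have hW : G.walkWeight x (p.drop n) ≠ ⊤ := by
    intro h
    rw [h, add_top] at hsplit
    exact hfin (hw ▸ hsplit)
  refine le_antisymm (G.dist_le'' ?_) ?_
  · rfl
  · refine le_sInf ?_
    rintro c ⟨r, hr, rfl⟩
    by_contra hlt
    push_neg at hlt
    have hends : WalkEnds v (r ++ p.drop n) s := by
      unfold WalkEnds at *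
      rw [getLastD_append'', hr]
      have h2 := hp
      unfold WalkEnds at h2
      rw [← h2]
      conv_rhs => rw [← List.take_append_drop n p]
      rw [getLastD_append'']
    have h1 : G.dist v s ≤ G.walkWeight v r + G.walkWeight x (p.drop n) := by
      have := G.dist_le'' hends
      rwa [walkWeight_append', hr] at this
    have h2 : G.walkWeight v r + G.walkWeight x (p.drop n)
        < G.walkWeight v (p.take n) + G.walkWeight x (p.drop n) :=
      ENNReal.add_lt_add_right hW hlt
    rw [← hsplit, hw] at h2
    exact absurd (lt_of_le_of_lt h1 h2) (lt_irrefl _)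

/-- Key lemma for statement 16: if `x` sits at index `k` on a minimum-weight walk to a
member `s` of the union of `(k+1)`-closest sets, and likewise `y` for `t`, then
`dist v x ≤ dist v y`. -/
theorem key16 {V : Type*} [Finite V] (G : WGraph V) (hpos : G.Positive) (k : ℕ) (v : V)
    {s t x y : V} (hs : s ∈ G.closestUnion (k + 1) v) (ht : t ∈ G.closestUnion (k + 1) v)
    {p q : List V} (hpe : WalkEnds v p s) (hpw : G.walkWeight v p = G.dist v s)
    (hpx : p[k]? = some x)
    (hqe : WalkEnds v q t) (hqw : G.walkWeight v q = G.dist v t)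
    (hqy : q[k]? = some y) :
    G.dist v x ≤ G.dist v y := by
  obtain ⟨Cs, hCs, hsCs⟩ := hs
  obtain ⟨Ct, hCt, htCt⟩ := ht
  have hsfin : G.dist v s ≠ ⊤ := (hCs.1 hsCs).2
  have htfin : G.dist v t ≠ ⊤ := (hCt.1 htCt).2
  have hkp : k < p.length := (List.getElem?_eq_some_iff.mp hpx).1
  have hkq : k < q.length := (List.getElem?_eq_some_iff.mp hqy).1
  -- x side: dist v x ≤ dist v s
  have hxval : G.dist v x = G.walkWeight v (p.take (k + 1)) := by
    have := G.dist_prefix' hpe hpw hsfin (k + 1)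
    rwa [getLastD_take_succ' v p k hkp, (List.getElem?_eq_some_iff.mp hpx).2] at this
  have hxle : G.dist v x ≤ G.dist v s := by
    rw [hxval, ← hpw]
    conv_rhs => rw [← List.take_append_drop (k + 1) p]
    rw [walkWeight_append']
    exact le_self_add
  -- the q side: prefix weights
  set D : ℕ → ℝ≥0∞ := fun n => G.walkWeight v (q.take n) with hD
  have hDfull : D q.length = G.dist v t := by
    rw [hD]; simp only [List.take_length]; exact hqw
  have hDle : Monotone D := by
    apply monotone_nat_of_le_succ
    intro n
    by_cases hn : n < q.length
    · rw [hD]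
      simp only
      rw [List.take_succ, walkWeight_append']
      exact le_self_add
    · push_neg at hn
      have : q.take (n + 1) = q.take n := by
        rw [List.take_of_length_le hn, List.take_of_length_le (le_trans hn (Nat.le_succ n))]
      rw [hD]; simp only [this]; exact le_rfl
  have hDfin : ∀ n, D n ≠ ⊤ := by
    intro n h
    have h1 : D n ≤ D q.length := by
      by_cases hn : n ≤ q.length
      · exact hDle hn
      · push_neg at hn
        have : q.take n = q.take q.length := by
          rw [List.take_of_length_le (le_of_lt hn), List.take_length]
        rw [hD]; simp only [this]
        exact le_rfl
    rw [hDfull, h] at h1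
    exact htfin (top_le_iff.mp h1)
  have hDlt : ∀ n < q.length, D n < D (n + 1) := by
    intro n hn
    have hstep : D (n + 1) = D n + G.walkWeight ((q.take n).getLastD v) (q[n] :: []) := by
      rw [hD]
      simp only
      rw [List.take_succ, walkWeight_append', List.getElem?_eq_getElem hn]
      rfl
    rw [hstep]
    refine ENNReal.lt_add_right (hDfin n) ?_
    simp only [walkWeight, add_zero]
    exact (hpos _ _).ne'
  have hDstrict : ∀ n m, n < m → m ≤ q.length → D n < D m := by
    intro n m hnm hm
    exact lt_of_lt_of_le (hDlt n (by omega)) (hDle (by omega))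
  -- the vertices on the q walk
  set wv : ℕ → V := fun i => (q.take (i + 1)).getLastD v with hwv
  have hwdist : ∀ i, G.dist v (wv i) = D (i + 1) := fun i =>
    G.dist_prefix' hqe hqw htfin (i + 1)
  have hwy : wv k = y := by
    rw [hwv]; simp only
    rw [getLastD_take_succ' v q k hkq, (List.getElem?_eq_some_iff.mp hqy).2]
  have hwreach : ∀ i ≤ k, wv i ∈ G.Reach v := by
    intro i hi
    constructor
    · intro h
      have h0 : G.dist v (wv i) = 0 := by rw [h, G.dist_self']
      have h1 : (0 : ℝ≥0∞) < D (i + 1) :=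
        lt_of_le_of_lt (zero_le : (0 : ℝ≥0∞) ≤ D 0) (hDstrict 0 (i + 1) (by omega) (by omega))
      rw [← hwdist i, h0] at h1
      exact lt_irrefl _ h1
    · rw [hwdist i]
      exact hDfin (i + 1)
  have hwinj : ∀ i < k + 1, ∀ j < k + 1, wv i = wv j → i = j := by
    intro i hi j hj hij
    by_contra hne
    rcases Nat.lt_or_ge i j with h | h
    · have := hDstrict (i + 1) (j + 1) (by omega) (by omega)
      rw [← hwdist i, ← hwdist j, hij] at this
      exact lt_irrefl _ this
    · have hji : j < i := by omega
      have := hDstrict (j + 1) (i + 1) (by omega) (by omega)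
      rw [← hwdist i, ← hwdist j, hij] at this
      exact lt_irrefl _ this
  have hR : k + 1 ≤ (G.Reach v).ncard :=
    Set.le_ncard_of_inj_on_range wv (fun i hi => hwreach i (by omega)) hwinj (Set.toFinite _)
  have hCscard : Cs.ncard = k + 1 := by
    rw [hCs.2.1, min_eq_right hR]
  have hyD : G.dist v y = D (k + 1) := by rw [← hwy, hwdist k]
  have hsley : G.dist v s ≤ G.dist v y := by
    by_cases hsub : ∀ i ≤ k, wv i ∈ Cs
    · -- the walk vertices fill up Cs, so s is one of them
      set W : Set V := wv '' {i | i ≤ k} with hW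
      have hWsub : W ⊆ Cs := by
        rintro _ ⟨i, hi, rfl⟩
        exact hsub i hi
      have hWcard : W.ncard = k + 1 := by
        rw [hW, Set.ncard_image_of_injOn]
        · have : {i | i ≤ k} = ↑(Finset.Iic k) := by ext i; simp
          rw [this, Set.ncard_coe_finset, Nat.card_Iic]
        · intro i hi j hj hij
          exact hwinj i (by simpa using Nat.lt_succ_of_le hi) j
            (by simpa using Nat.lt_succ_of_le hj) hij
      have hWeq : W = Cs :=
        Set.eq_of_subset_of_ncard_le hWsub (by rw [hWcard, hCscard]) (Set.toFinite _)
      have : s ∈ W := hWeq ▸ hsCs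
      obtain ⟨i, hi, hiw⟩ := this
      simp only [Set.mem_setOf_eq] at hi
      rw [← hiw, hwdist i, hyD]
      exact hDle (by omega)
    · push_neg at hsub
      obtain ⟨i, hik, hiCs⟩ := hsub
      have h1 : G.dist v s ≤ G.dist v (wv i) :=
        hCs.2.2 s hsCs (wv i) ⟨hwreach i hik, hiCs⟩
      rw [hwdist i, hyD] at *
      exact le_trans h1 (hDle (by omega))
  exact le_trans hxle hsley

end WGraph

/-- if `v` lacks a `(k,k+1)`-ball (undirected, strictly positive
weights) then all vertices at the final level `k+1` of the `(k+1)`-constrained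
shortest path tree of `v` (i.e. at index `k` in the walk lists) have the same weight
distance to `v`. -/
theorem stmt16 {V : Type*} [Finite V] [DecidableEq V] (G : WGraph V)
    (hsym : G.Symm) (hpos : G.Positive) (k : ℕ) (hk : 1 ≤ k) (v : V)
    (hball : ¬ G.HasBall k (k + 1) v) :
    ∀ T : FHTree G v (G.closestUnion (k + 1) v), ∀ a b : V,
      (∃ s hs, (T.walk s hs)[k]? = some a) →
      (∃ s hs, (T.walk s hs)[k]? = some b) →
      G.dist v a = G.dist v b := by
  intro T a b ⟨s, hs, ha⟩ ⟨t, ht, hb⟩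
  exact le_antisymm
    (G.key16 hpos k v hs ht (T.ends s hs) (T.minWeight s hs) ha
      (T.ends t ht) (T.minWeight t ht) hb)
    (G.key16 hpos k v ht hs (T.ends t ht) (T.minWeight t ht) hb
      (T.ends s hs) (T.minWeight s hs) ha)
end
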